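/- For any τ > 0 and Z ∈ ℝ^{m×n} with SVD Z = U diag(σ) V^⊤, the matrix S_τ(Z) := U diag((σ − τ)₊) V^⊤ is the unique minimizer of L ↦ ‖L‖_* + (1/(2τ))‖L − Z‖_F². -/

import Mathlib

noncomputable def nuclearNorm {m n : ℕ} (A : Matrix (Fin m) (Fin n) ℝ) : ℝ :=
  ∑ i, Real.sqrt ((show (A.transpose * A).IsHermitian by
    simpa [Matrix.conjTranspose_eq_transpose_of_trivial] using
      Matrix.isHermitian_conjTranspose_mul_self A).eigenvalues i)

noncomputable def frobSq {m n : ℕ} (A : Matrix (Fin m) (Fin n) ℝ) : ℝ := ∑ i, ∑ j, (A i j)^2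

/-! The nuclear norm is the support function of the operator-norm unit ball: `tr(Wᵀ L) ≤ ‖L‖_*`
for every contraction `W`, with equality for the polar factor of `L`. With
`G = U diag(min(σ, τ)/τ) Vᵀ` we have `Z = S_τ(Z) + τ G`, and `G` is a contraction with
`tr(Gᵀ S_τ(Z)) = ∑ (σ - τ)₊ ≥ ‖S_τ(Z)‖_*`, so `G` is a subgradient of `‖·‖_*` at `S_τ(Z)`.
Completing the square in `‖L - Z‖_F²` then gives
`F(L) ≥ F(S_τ(Z)) + ‖L - S_τ(Z)‖_F² / (2τ)` for the objective `F`, which yields both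
minimality and uniqueness. -/

open Matrix

lemma transpose_apply_dotProduct_self {m n : Type*} [Fintype m] [DecidableEq n]
    {U : Matrix m n ℝ} (hU : Uᵀ * U = 1) (j : n) : Uᵀ j ⬝ᵥ Uᵀ j = 1 := by
  rw [← one_apply_eq (α := ℝ) j, ← hU]
  rfl

section Contraction

variable {l m n : Type*} [Fintype l] [Fintype m] [Fintype n]

def IsContraction (W : Matrix m n ℝ) : Prop :=
  ∀ x, (W *ᵥ x) ⬝ᵥ (W *ᵥ x) ≤ x ⬝ᵥ x

lemma dotProduct_le_sqrt_mul_sqrt (x y : n → ℝ) : x ⬝ᵥ y ≤ √(x ⬝ᵥ x) * √(y ⬝ᵥ y) := by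
  simpa only [dotProduct, sq] using Real.sum_mul_le_sqrt_mul_sqrt Finset.univ x y

lemma dotProduct_mulVec_self (W : Matrix m n ℝ) (x : n → ℝ) :
    (W *ᵥ x) ⬝ᵥ (W *ᵥ x) = x ⬝ᵥ ((Wᵀ * W) *ᵥ x) := by
  rw [← mulVec_mulVec, mulVec_transpose, dotProduct_comm x, ← dotProduct_mulVec]

lemma IsContraction.mulVec_dotProduct_le {W : Matrix m n ℝ} (hW : IsContraction W)
    (x : n → ℝ) (y : m → ℝ) : (W *ᵥ x) ⬝ᵥ y ≤ √(x ⬝ᵥ x) * √(y ⬝ᵥ y) := by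
  grw [dotProduct_le_sqrt_mul_sqrt, hW x]

lemma IsContraction.mul {A : Matrix l m ℝ} {B : Matrix m n ℝ} (hA : IsContraction A)
    (hB : IsContraction B) : IsContraction (A * B) := fun x => by
  rw [← mulVec_mulVec]
  exact (hA _).trans (hB x)

-- `‖Wᵀ x‖² = ⟪W (Wᵀ x), x⟫ ≤ ‖Wᵀ x‖ ‖x‖`
lemma IsContraction.transpose {W : Matrix m n ℝ} (hW : IsContraction W) :
    IsContraction Wᵀ := fun x => by
  set y := Wᵀ *ᵥ x
  have hy : 0 ≤ y ⬝ᵥ y := Fintype.sum_nonneg fun _ => mul_self_nonneg _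
  have hx : 0 ≤ x ⬝ᵥ x := Fintype.sum_nonneg fun _ => mul_self_nonneg _
  have h : y ⬝ᵥ y ≤ √(y ⬝ᵥ y) * √(x ⬝ᵥ x) := calc
    y ⬝ᵥ y = (W *ᵥ y) ⬝ᵥ x := by
      rw [dotProduct_mulVec y Wᵀ x, ← mulVec_transpose, transpose_transpose]
    _ ≤ √(y ⬝ᵥ y) * √(x ⬝ᵥ x) := hW.mulVec_dotProduct_le y x
  have hyx : √(y ⬝ᵥ y) ≤ √(x ⬝ᵥ x) := by
    nlinarith [Real.sq_sqrt hy, Real.sqrt_nonneg (y ⬝ᵥ y), Real.sqrt_nonneg (x ⬝ᵥ x)]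
  exact (Real.sqrt_le_sqrt_iff hx).1 hyx

lemma isContraction_of_transpose_mul_self_eq_diagonal [DecidableEq n] {W : Matrix m n ℝ}
    {e : n → ℝ} (hW : Wᵀ * W = diagonal e) (he : ∀ i, e i ≤ 1) : IsContraction W := fun x => by
  rw [dotProduct_mulVec_self, hW]
  simp only [dotProduct, mulVec_diagonal]
  exact Finset.sum_le_sum fun i _ => by
    nlinarith [mul_self_nonneg (x i), he i]

lemma isContraction_of_transpose_mul_self_eq_one [DecidableEq n] {W : Matrix m n ℝ}
    (hW : Wᵀ * W = 1) : IsContraction W :=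
  isContraction_of_transpose_mul_self_eq_diagonal (e := 1) hW fun _ => le_rfl

lemma isContraction_mul_diagonal_mul_transpose [DecidableEq l] {U : Matrix m l ℝ}
    {V : Matrix n l ℝ} {e : l → ℝ} (hU : Uᵀ * U = 1) (hV : Vᵀ * V = 1) (he : ∀ i, |e i| ≤ 1) :
    IsContraction (U * diagonal e * Vᵀ) := by
  refine ((isContraction_of_transpose_mul_self_eq_one hU).mul ?_).mul
    (isContraction_of_transpose_mul_self_eq_one hV).transpose
  refine isContraction_of_transpose_mul_self_eq_diagonal (e := fun i => e i * e i) ?_ fun i => ?_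
  · rw [diagonal_transpose, diagonal_mul_diagonal]
  · rw [← sq, sq_le_one_iff_abs_le_one]; exact he i

end Contraction

lemma isHermitian_transpose_mul_self {m n : Type*} [Fintype m] (L : Matrix m n ℝ) :
    (Lᵀ * L).IsHermitian := by
  simpa only [conjTranspose_eq_transpose_of_trivial] using isHermitian_conjTranspose_mul_self L

namespace Matrix.IsHermitian

variable {n : Type*} [Fintype n] [DecidableEq n] {A : Matrix n n ℝ} (hA : A.IsHermitian)

lemma transpose_eigenvectorUnitary_mul_self :
    (hA.eigenvectorUnitary : Matrix n n ℝ)ᵀ * hA.eigenvectorUnitary = 1 := by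
  rw [← conjTranspose_eq_transpose_of_trivial, ← star_eq_conjTranspose]
  exact Unitary.coe_star_mul_self _

lemma eigenvectorUnitary_mul_transpose_self :
    (hA.eigenvectorUnitary : Matrix n n ℝ) * (hA.eigenvectorUnitary : Matrix n n ℝ)ᵀ = 1 := by
  rw [← conjTranspose_eq_transpose_of_trivial, ← star_eq_conjTranspose]
  exact Unitary.coe_mul_star_self _

lemma transpose_eigenvectorUnitary_mul_mul_eigenvectorUnitary :
    (hA.eigenvectorUnitary : Matrix n n ℝ)ᵀ * A * hA.eigenvectorUnitary =
      diagonal hA.eigenvalues := by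
  rw [← conjTranspose_eq_transpose_of_trivial, ← star_eq_conjTranspose]
  simpa using hA.conjStarAlgAut_star_eigenvectorUnitary

end Matrix.IsHermitian

lemma trace_transpose_mul_eq_sum_dotProduct {m n : Type*} [Fintype m] [Fintype n] [DecidableEq n]
    {A B : Matrix m n ℝ} {Q : Matrix n n ℝ} (hQ : Q * Qᵀ = 1) :
    (Aᵀ * B).trace = ∑ i, (A *ᵥ Qᵀ i) ⬝ᵥ (B *ᵥ Qᵀ i) := calc
  (Aᵀ * B).trace = (Aᵀ * B * (Q * Qᵀ)).trace := by rw [hQ, Matrix.mul_one]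
  _ = ((A * Q)ᵀ * (B * Q)).trace := by
    rw [← Matrix.mul_assoc, trace_mul_comm]
    simp only [transpose_mul, Matrix.mul_assoc]
  _ = ∑ i, (A *ᵥ Qᵀ i) ⬝ᵥ (B *ᵥ Qᵀ i) := by
    simp only [trace, diag_apply, mul_apply']; rfl

section NuclearNorm

variable {m n : ℕ}

lemma nuclearNorm_eq_sum_sqrt_eigenvalues (L : Matrix (Fin m) (Fin n) ℝ)
    (hL : (Lᵀ * L).IsHermitian) : nuclearNorm L = ∑ i, √(hL.eigenvalues i) :=
  rfl

lemma IsContraction.trace_transpose_mul_le_nuclearNorm {W : Matrix (Fin m) (Fin n) ℝ}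
    (hW : IsContraction W) (L : Matrix (Fin m) (Fin n) ℝ) : (Wᵀ * L).trace ≤ nuclearNorm L := by
  have hL := isHermitian_transpose_mul_self L
  set Q : Matrix (Fin n) (Fin n) ℝ := (hL.eigenvectorUnitary : Matrix (Fin n) (Fin n) ℝ)
  rw [trace_transpose_mul_eq_sum_dotProduct hL.eigenvectorUnitary_mul_transpose_self,
    nuclearNorm_eq_sum_sqrt_eigenvalues L hL]
  refine Finset.sum_le_sum fun i _ => ?_
  have hq : Qᵀ i ⬝ᵥ Qᵀ i = 1 :=
    transpose_apply_dotProduct_self hL.transpose_eigenvectorUnitary_mul_self i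
  have hLq : (L *ᵥ Qᵀ i) ⬝ᵥ (L *ᵥ Qᵀ i) = hL.eigenvalues i := calc
    _ = ((L * Q)ᵀ * (L * Q)) i i := rfl
    _ = (Qᵀ * (Lᵀ * L) * Q) i i := by simp only [transpose_mul, Matrix.mul_assoc]
    _ = hL.eigenvalues i := by
      rw [hL.transpose_eigenvectorUnitary_mul_mul_eigenvectorUnitary, diagonal_apply_eq]
  calc (W *ᵥ Qᵀ i) ⬝ᵥ (L *ᵥ Qᵀ i)
      ≤ √(Qᵀ i ⬝ᵥ Qᵀ i) * √((L *ᵥ Qᵀ i) ⬝ᵥ (L *ᵥ Qᵀ i)) := hW.mulVec_dotProduct_le _ _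
    _ = √(hL.eigenvalues i) := by rw [hq, hLq, Real.sqrt_one, one_mul]

-- The witness is the polar factor `L Q diag(λ^{-1/2}) Qᵀ`, with `0⁻¹ = 0` on the kernel of `L`.
lemma exists_isContraction_trace_transpose_mul_eq_nuclearNorm (L : Matrix (Fin m) (Fin n) ℝ) :
    ∃ W : Matrix (Fin m) (Fin n) ℝ, IsContraction W ∧ (Wᵀ * L).trace = nuclearNorm L := by
  have hL := isHermitian_transpose_mul_self L
  set Q : Matrix (Fin n) (Fin n) ℝ := (hL.eigenvectorUnitary : Matrix (Fin n) (Fin n) ℝ)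
  set μ := hL.eigenvalues
  have hdiag : Qᵀ * (Lᵀ * L) * Q = diagonal μ :=
    hL.transpose_eigenvectorUnitary_mul_mul_eigenvectorUnitary
  set g : Fin n → ℝ := fun i => (√(μ i))⁻¹
  have hP : (L * Q * diagonal g)ᵀ * (L * Q * diagonal g) = diagonal fun i => g i * μ i * g i := by
    calc _ = diagonal g * (Qᵀ * (Lᵀ * L) * Q) * diagonal g := by
          simp only [transpose_mul, diagonal_transpose, Matrix.mul_assoc]
      _ = _ := by rw [hdiag, diagonal_mul_diagonal, diagonal_mul_diagonal]
  refine ⟨L * Q * diagonal g * Qᵀ, ?_, ?_⟩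
  · have hQ := isContraction_of_transpose_mul_self_eq_one hL.transpose_eigenvectorUnitary_mul_self
    refine (isContraction_of_transpose_mul_self_eq_diagonal hP fun i => ?_).mul hQ.transpose
    calc g i * μ i * g i = μ i / √(μ i) / √(μ i) := by ring
      _ ≤ 1 := by rw [Real.div_sqrt]; exact div_self_le_one _
  · calc ((L * Q * diagonal g * Qᵀ)ᵀ * L).trace = (diagonal g * (Qᵀ * (Lᵀ * L) * Q)).trace := by
          simp only [transpose_mul, transpose_transpose, diagonal_transpose, Matrix.mul_assoc]
          rw [trace_mul_comm]
          simp only [Matrix.mul_assoc]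
      _ = ∑ i, √(μ i) := by
          rw [hdiag, diagonal_mul_diagonal, trace_diagonal]
          exact Finset.sum_congr rfl fun i _ => by rw [inv_mul_eq_div, Real.div_sqrt]
      _ = nuclearNorm L := (nuclearNorm_eq_sum_sqrt_eigenvalues L hL).symm

end NuclearNorm

section SVD

variable {m n : ℕ} {ι : Type*} [Fintype ι] [DecidableEq ι]
  {U : Matrix (Fin m) ι ℝ} {V : Matrix (Fin n) ι ℝ}

lemma IsContraction.trace_transpose_mul_mul_diagonal_mul_transpose_le {W : Matrix (Fin m) (Fin n) ℝ}
    (hW : IsContraction W) (hU : Uᵀ * U = 1) (hV : Vᵀ * V = 1) {d : ι → ℝ}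
    (hd : ∀ j, 0 ≤ d j) : (Wᵀ * (U * diagonal d * Vᵀ)).trace ≤ ∑ j, d j := calc
  (Wᵀ * (U * diagonal d * Vᵀ)).trace = ∑ j, (W *ᵥ Vᵀ j) ⬝ᵥ Uᵀ j * d j := by
    rw [← Matrix.mul_assoc, trace_mul_comm, ← Matrix.mul_assoc, ← Matrix.mul_assoc]
    simp only [trace, diag_apply, mul_diagonal, ← transpose_mul]
    rfl
  _ ≤ ∑ j, d j := Finset.sum_le_sum fun j _ => by
    refine mul_le_of_le_one_left (hd j) ?_
    calc (W *ᵥ Vᵀ j) ⬝ᵥ Uᵀ j ≤ √(Vᵀ j ⬝ᵥ Vᵀ j) * √(Uᵀ j ⬝ᵥ Uᵀ j) := hW.mulVec_dotProduct_le _ _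
      _ = 1 := by
        rw [transpose_apply_dotProduct_self hV, transpose_apply_dotProduct_self hU, Real.sqrt_one,
          one_mul]

lemma nuclearNorm_mul_diagonal_mul_transpose_le (hU : Uᵀ * U = 1) (hV : Vᵀ * V = 1)
    {d : ι → ℝ} (hd : ∀ j, 0 ≤ d j) : nuclearNorm (U * diagonal d * Vᵀ) ≤ ∑ j, d j := by
  obtain ⟨W, hW, hWL⟩ := exists_isContraction_trace_transpose_mul_eq_nuclearNorm
    (U * diagonal d * Vᵀ)
  exact hWL ▸ hW.trace_transpose_mul_mul_diagonal_mul_transpose_le hU hV hd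

lemma trace_transpose_mul_diagonal_mul_transpose (hU : Uᵀ * U = 1) (hV : Vᵀ * V = 1)
    (e d : ι → ℝ) : ((U * diagonal e * Vᵀ)ᵀ * (U * diagonal d * Vᵀ)).trace = ∑ j, e j * d j := calc
  _ = (diagonal e * (Uᵀ * U) * diagonal d * (Vᵀ * V)).trace := by
    simp only [transpose_mul, transpose_transpose, diagonal_transpose, Matrix.mul_assoc]
    rw [trace_mul_comm]
    simp only [Matrix.mul_assoc]
  _ = ∑ j, e j * d j := by
    rw [hU, hV, Matrix.mul_one, Matrix.mul_one, diagonal_mul_diagonal, trace_diagonal]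

end SVD

def IsSubgradient {m n : Type*} [Fintype m] [Fintype n] (f : Matrix m n ℝ → ℝ)
    (X G : Matrix m n ℝ) : Prop :=
  ∀ L, f X + (Gᵀ * (L - X)).trace ≤ f L

lemma isSubgradient_nuclearNorm_mul_diagonal_mul_transpose {m n : ℕ} {ι : Type*} [Fintype ι]
    [DecidableEq ι] {U : Matrix (Fin m) ι ℝ} {V : Matrix (Fin n) ι ℝ} (hU : Uᵀ * U = 1)
    (hV : Vᵀ * V = 1) {d w : ι → ℝ} (hd : ∀ j, 0 ≤ d j) (hw : ∀ j, |w j| ≤ 1)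
    (hwd : ∀ j, w j * d j = d j) :
    IsSubgradient nuclearNorm (U * diagonal d * Vᵀ) (U * diagonal w * Vᵀ) := fun L => by
  rw [Matrix.mul_sub, trace_sub, trace_transpose_mul_diagonal_mul_transpose hU hV,
    Finset.sum_congr rfl fun j _ => hwd j]
  linarith [nuclearNorm_mul_diagonal_mul_transpose_le hU hV hd,
    (isContraction_mul_diagonal_mul_transpose hU hV hw).trace_transpose_mul_le_nuclearNorm L]

section Prox

variable {m n : ℕ}

lemma frobSq_nonneg (A : Matrix (Fin m) (Fin n) ℝ) : 0 ≤ frobSq A :=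
  Finset.sum_nonneg fun _ _ => Finset.sum_nonneg fun _ _ => sq_nonneg _

lemma frobSq_eq_trace (A : Matrix (Fin m) (Fin n) ℝ) : frobSq A = (Aᵀ * A).trace := by
  simp only [frobSq, trace, diag_apply, mul_apply, transpose_apply, sq]
  exact Finset.sum_comm

lemma frobSq_eq_zero_iff {A : Matrix (Fin m) (Fin n) ℝ} : frobSq A = 0 ↔ A = 0 := by
  rw [frobSq_eq_trace, ← conjTranspose_eq_transpose_of_trivial,
    trace_conjTranspose_mul_self_eq_zero_iff]

lemma frobSq_sub_smul (A B : Matrix (Fin m) (Fin n) ℝ) (c : ℝ) :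
    frobSq (A - c • B) = frobSq A - 2 * c * (Bᵀ * A).trace + c ^ 2 * frobSq B := by
  have h : (Aᵀ * B).trace = (Bᵀ * A).trace := by
    rw [← trace_transpose, transpose_mul, transpose_transpose]
  simp only [frobSq_eq_trace, transpose_sub, transpose_smul, Matrix.sub_mul, Matrix.mul_sub,
    Matrix.smul_mul, Matrix.mul_smul, trace_sub, trace_smul, smul_eq_mul, h]
  ring

variable {f : Matrix (Fin m) (Fin n) ℝ → ℝ} {X G Z : Matrix (Fin m) (Fin n) ℝ} {τ : ℝ}

-- Completing the square: `‖L - Z‖² = ‖L - X‖² - 2τ⟪G, L - X⟫ + ‖X - Z‖²`.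
lemma IsSubgradient.add_frobSq_le (hG : IsSubgradient f X G) (hτ : τ ≠ 0)
    (hZ : Z = X + τ • G) (L : Matrix (Fin m) (Fin n) ℝ) :
    f X + 1 / (2 * τ) * frobSq (X - Z) + 1 / (2 * τ) * frobSq (L - X) ≤
      f L + 1 / (2 * τ) * frobSq (L - Z) := by
  have hLZ : L - Z = (L - X) - τ • G := by rw [hZ]; abel
  have hXZ : X - Z = 0 - τ • G := by rw [hZ]; abel
  have hk : 1 / (2 * τ) * (2 * τ) = 1 := by field_simp
  rw [hLZ, hXZ, frobSq_sub_smul, frobSq_sub_smul, Matrix.mul_zero, trace_zero,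
    frobSq_eq_zero_iff.2 rfl]
  linear_combination hG L + (Gᵀ * (L - X)).trace * hk

lemma IsSubgradient.objective_le (hG : IsSubgradient f X G) (hτ : 0 < τ) (hZ : Z = X + τ • G)
    (L : Matrix (Fin m) (Fin n) ℝ) :
    f X + 1 / (2 * τ) * frobSq (X - Z) ≤ f L + 1 / (2 * τ) * frobSq (L - Z) := by
  have hLX : 0 ≤ 1 / (2 * τ) * frobSq (L - X) := mul_nonneg (by positivity) (frobSq_nonneg _)
  linarith [hG.add_frobSq_le hτ.ne' hZ L]

lemma IsSubgradient.eq_of_objective_le (hG : IsSubgradient f X G) (hτ : 0 < τ)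
    (hZ : Z = X + τ • G) {L : Matrix (Fin m) (Fin n) ℝ}
    (hL : f L + 1 / (2 * τ) * frobSq (L - Z) ≤ f X + 1 / (2 * τ) * frobSq (X - Z)) : L = X := by
  have hLX : 1 / (2 * τ) * frobSq (L - X) ≤ 0 := by linarith [hG.add_frobSq_le hτ.ne' hZ L]
  have h0 : frobSq (L - X) = 0 :=
    (nonpos_of_mul_nonpos_right hLX (by positivity)).antisymm (frobSq_nonneg _)
  exact sub_eq_zero.1 (frobSq_eq_zero_iff.1 h0)

end Prox

/-- for `τ > 0` and `Z = U diag(σ) Vᵀ` an SVD of `Z`, the matrix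
`S_τ(Z) = U diag((σ − τ)₊) Vᵀ` is the unique minimizer of
`L ↦ ‖L‖_* + (1/(2τ))‖L − Z‖_F²` (singular value shrinkage). -/
theorem singular_value_shrinkage_is_prox {m n r : ℕ} (τ : ℝ) (hτ : 0 < τ)
    (Z : Matrix (Fin m) (Fin n) ℝ)
    (U : Matrix (Fin m) (Fin r) ℝ) (V : Matrix (Fin n) (Fin r) ℝ) (σ : Fin r → ℝ)
    (hU : U.transpose * U = 1) (hV : V.transpose * V = 1) (hσ : ∀ i, 0 ≤ σ i)
    (hZ : Z = U * Matrix.diagonal σ * V.transpose) :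
    let Sτ : Matrix (Fin m) (Fin n) ℝ :=
      U * Matrix.diagonal (fun i => max (σ i - τ) 0) * V.transpose
    (∀ L : Matrix (Fin m) (Fin n) ℝ,
        nuclearNorm Sτ + (1/(2*τ)) * frobSq (Sτ - Z) ≤
          nuclearNorm L + (1/(2*τ)) * frobSq (L - Z)) ∧
    (∀ L : Matrix (Fin m) (Fin n) ℝ,
        (∀ L' : Matrix (Fin m) (Fin n) ℝ,
          nuclearNorm L + (1/(2*τ)) * frobSq (L - Z) ≤
            nuclearNorm L' + (1/(2*τ)) * frobSq (L' - Z)) → L = Sτ) := by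
  intro Sτ
  set d : Fin r → ℝ := fun j => max (σ j - τ) 0
  set w : Fin r → ℝ := fun j => min (σ j) τ / τ
  have hw : ∀ j, |w j| ≤ 1 := fun j => abs_le.2
    ⟨by linarith [div_nonneg (le_min (hσ j) hτ.le) hτ.le],
      div_le_one_of_le₀ (min_le_right _ _) hτ.le⟩
  have hwd : ∀ j, w j * d j = d j := fun j => by
    rcases le_total (σ j) τ with h | h
    · simp [d, max_eq_right (sub_nonpos.2 h)]
    · simp [w, min_eq_right h, hτ.ne']
  have hσd : ∀ j, d j + τ * w j = σ j := fun j => by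
    simp only [d, w, mul_div_cancel₀ _ hτ.ne']
    rcases le_total (σ j) τ with h | h
    · rw [max_eq_right (sub_nonpos.2 h), min_eq_left h, zero_add]
    · rw [max_eq_left (sub_nonneg.2 h), min_eq_right h, sub_add_cancel]
  have hZS : Z = Sτ + τ • (U * diagonal w * Vᵀ) := by
    rw [hZ, ← Matrix.smul_mul, ← Matrix.mul_smul, ← diagonal_smul, ← Matrix.add_mul,
      ← Matrix.mul_add, diagonal_add]
    exact congrArg (fun e => U * diagonal e * Vᵀ) (funext fun j => (hσd j).symm)
  have hG := isSubgradient_nuclearNorm_mul_diagonal_mul_transpose hU hV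
    (fun j => le_max_right _ _) hw hwd
  exact ⟨hG.objective_le hτ hZS, fun L hL => hG.eq_of_objective_le hτ hZS (hL Sτ)⟩
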